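/- arXiv:2603.29594 — 6 statements merged into one kernel-verified Lean document; each statement's English description precedes it below -/
import Mathlib

section
/- Coppel-type growth bound: let A be a real n×n matrix. Then for every t ≥ 0 and every vector v ∈ ℝⁿ, ‖exp(tA) v‖₂ ≤ e^{t·μ₂(A)} ‖v‖₂, where exp denotes the matrix exponential. Consequently every solution of ẋ = Ax satisfies ‖x(t)‖₂ ≤ e^{t·μ₂(A)} ‖x(0)‖₂ for t ≥ 0. -/
/-!
For a trajectory `x` of `ẋ = Ax`, the function `g = ‖x‖²` satisfies
`g' = 2⟪x, Ax⟫ = 2⟪x, Sx⟫ ≤ 2 μ₂(A) g`, where `S = (A + Aᵀ)/2`; the last inequality follows by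
expanding `x` in an orthonormal eigenbasis of `S`. Grönwall's inequality then gives
`g t ≤ e^{2t μ₂(A)} g 0`. The bound on `exp(tA) v` is the case `x t = exp(tA) v`.
-/

open Matrix

/-- Symmetric part of a real square matrix: `(A + Aᵀ)/2`. -/
noncomputable def symPart {n : ℕ} (A : Matrix (Fin n) (Fin n) ℝ) : Matrix (Fin n) (Fin n) ℝ :=
  (1 / 2 : ℝ) • (A + Aᵀ)

theorem symPart_isHermitian {n : ℕ} (A : Matrix (Fin n) (Fin n) ℝ) :
    (symPart A).IsHermitian := by
  ext i j
  simp [symPart, Matrix.IsHermitian, Matrix.conjTranspose_apply, mul_comm, add_comm]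
  ring

/-- Logarithmic 2-norm of a real square matrix: the largest eigenvalue of its
symmetric part `(A + Aᵀ)/2`. -/
noncomputable def mu2 {n : ℕ} (A : Matrix (Fin n) (Fin n) ℝ) : ℝ :=
  ⨆ i, (symPart_isHermitian A).eigenvalues i

/-- Spectral norm of a real matrix: the operator norm induced by the Euclidean norm. -/
noncomputable def specNorm {m n : ℕ} (A : Matrix (Fin m) (Fin n) ℝ) : ℝ :=
  ‖LinearMap.toContinuousLinearMap (Matrix.toEuclideanLin A)‖

/-- A real square matrix is Hurwitz if every complex eigenvalue (i.e. every element of the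
complex spectrum of its complexification) has strictly negative real part. -/
def IsHurwitz {n : ℕ} (A : Matrix (Fin n) (Fin n) ℝ) : Prop :=
  ∀ μ ∈ spectrum ℂ (A.map (Complex.ofReal ·)), μ.re < 0

open scoped RealInnerProductSpace

namespace Matrix

variable {ι : Type*} [Fintype ι] [DecidableEq ι]

theorem inner_toEuclideanLin_transpose (A : Matrix ι ι ℝ) (v : EuclideanSpace ℝ ι) :
    ⟪v, toEuclideanLin Aᵀ v⟫ = ⟪v, toEuclideanLin A v⟫ := by
  simp only [EuclideanSpace.inner_eq_star_dotProduct, toLpLin_apply, star_trivial]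
  rw [mulVec_transpose, ← dotProduct_mulVec, dotProduct_comm]

theorem IsHermitian.inner_toEuclideanLin_eq_sum {S : Matrix ι ι ℝ} (hS : S.IsHermitian)
    (v : EuclideanSpace ℝ ι) :
    ⟪v, toEuclideanLin S v⟫ = ∑ i, hS.eigenvalues i * ⟪hS.eigenvectorBasis i, v⟫ ^ 2 := by
  set b := hS.eigenvectorBasis
  have hsym : (toEuclideanLin S).IsSymmetric := isSymmetric_toEuclideanLin_iff.mpr hS
  rw [← b.sum_inner_mul_inner v (toEuclideanLin S v)]
  refine Finset.sum_congr rfl fun i _ => ?_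
  have hb : toEuclideanLin S (b i) = hS.eigenvalues i • b i := by
    rw [toLpLin_apply, hS.mulVec_eigenvectorBasis]; rfl
  rw [← hsym, hb, real_inner_smul_left, real_inner_comm v]
  ring

theorem IsHermitian.inner_toEuclideanLin_le_iSup_eigenvalues {S : Matrix ι ι ℝ}
    (hS : S.IsHermitian) (v : EuclideanSpace ℝ ι) :
    ⟪v, toEuclideanLin S v⟫ ≤ (⨆ i, hS.eigenvalues i) * ‖v‖ ^ 2 := by
  rw [hS.inner_toEuclideanLin_eq_sum, ← hS.eigenvectorBasis.sum_sq_inner_right v, Finset.mul_sum]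
  gcongr with i
  exact le_ciSup (Set.finite_range hS.eigenvalues).bddAbove i

end Matrix

theorem inner_toEuclideanLin_symPart {n : ℕ} (A : Matrix (Fin n) (Fin n) ℝ)
    (v : EuclideanSpace ℝ (Fin n)) :
    ⟪v, toEuclideanLin (symPart A) v⟫ = ⟪v, toEuclideanLin A v⟫ := by
  simp only [symPart, map_smul, map_add, LinearMap.add_apply, LinearMap.smul_apply,
    inner_add_right, real_inner_smul_right, inner_toEuclideanLin_transpose]
  ring

theorem inner_toEuclideanLin_le_mu2 {n : ℕ} (A : Matrix (Fin n) (Fin n) ℝ)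
    (v : EuclideanSpace ℝ (Fin n)) :
    ⟪v, toEuclideanLin A v⟫ ≤ mu2 A * ‖v‖ ^ 2 := by
  rw [← inner_toEuclideanLin_symPart]
  exact (symPart_isHermitian A).inner_toEuclideanLin_le_iSup_eigenvalues v

theorem norm_le_exp_mul_norm_of_inner_deriv_le {E : Type*} [NormedAddCommGroup E]
    [InnerProductSpace ℝ E] {x x' : ℝ → E} {μ : ℝ}
    (hx : ∀ t, 0 ≤ t → HasDerivAt x (x' t) t)
    (hμ : ∀ t, 0 ≤ t → ⟪x t, x' t⟫ ≤ μ * ‖x t‖ ^ 2) {t : ℝ} (ht : 0 ≤ t) :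
    ‖x t‖ ≤ Real.exp (t * μ) * ‖x 0‖ := by
  have hsq : ∀ s, 0 ≤ s → HasDerivAt (fun s => ‖x s‖ ^ 2) (2 * ⟪x s, x' s⟫) s :=
    fun s hs => (hx s hs).norm_sq
  have hgronwall : ‖x t‖ ^ 2 ≤ gronwallBound (‖x 0‖ ^ 2) (2 * μ) 0 (t - 0) :=
    le_gronwallBound_of_liminf_deriv_right_le (f := fun s => ‖x s‖ ^ 2) (b := t)
      (fun s hs => (hsq s hs.1).continuousAt.continuousWithinAt)
      (fun s hs _ hr => (hsq s hs.1).hasDerivWithinAt.liminf_right_slope_le hr) le_rfl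
      (fun s hs => by linarith [hμ s hs.1]) t ⟨ht, le_rfl⟩
  rw [gronwallBound_ε0, sub_zero] at hgronwall
  have hexp : Real.exp (2 * μ * t) = Real.exp (t * μ) ^ 2 := by
    rw [← Real.exp_nat_mul]; ring_nf
  rw [← pow_le_pow_iff_left₀ (norm_nonneg _) (by positivity) two_ne_zero]
  linarith [hexp ▸ hgronwall]

theorem hasDerivAt_toEuclideanLin_exp_smul_apply {ι : Type*} [Fintype ι] [DecidableEq ι]
    (A : Matrix ι ι ℝ) (v : EuclideanSpace ℝ ι) (t : ℝ) :
    HasDerivAt (fun s : ℝ => toEuclideanLin (NormedSpace.exp (s • A)) v)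
      (toEuclideanLin A (toEuclideanLin (NormedSpace.exp (t • A)) v)) t := by
  -- `NormedSpace.exp` depends only on the topology, so any normed algebra structure will do.
  let _ : NormedRing (Matrix ι ι ℝ) := Matrix.linftyOpNormedRing
  let _ : NormedAlgebra ℝ (Matrix ι ι ℝ) := Matrix.linftyOpNormedAlgebra
  let evalAt : Matrix ι ι ℝ →L[ℝ] EuclideanSpace ℝ ι :=
    LinearMap.toContinuousLinearMap ((LinearMap.applyₗ v).comp toEuclideanLin.toLinearMap)
  refine (evalAt.hasFDerivAt.comp_hasDerivAt t (hasDerivAt_exp_smul_const' A t)).congr_deriv ?_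
  change toEuclideanLin (A * NormedSpace.exp (t • A)) v = _
  rw [toLpLin_mul_same]
  rfl

/-- Coppel-type growth bound: for all `t ≥ 0` and vectors `v`,
`‖exp(tA) v‖₂ ≤ e^{t μ₂(A)} ‖v‖₂`; consequently every solution of `ẋ = Ax` satisfies
`‖x(t)‖₂ ≤ e^{t μ₂(A)} ‖x(0)‖₂` for `t ≥ 0`. -/
theorem coppel_growth_bound {n : ℕ} (A : Matrix (Fin n) (Fin n) ℝ) :
    (∀ t : ℝ, 0 ≤ t → ∀ v : EuclideanSpace ℝ (Fin n),
      ‖Matrix.toEuclideanLin (NormedSpace.exp (t • A)) v‖ ≤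
        Real.exp (t * mu2 A) * ‖v‖) ∧
    (∀ x : ℝ → EuclideanSpace ℝ (Fin n),
      (∀ t : ℝ, 0 ≤ t → HasDerivAt x (Matrix.toEuclideanLin A (x t)) t) →
      ∀ t : ℝ, 0 ≤ t → ‖x t‖ ≤ Real.exp (t * mu2 A) * ‖x 0‖) := by
  have solution_bound : ∀ x : ℝ → EuclideanSpace ℝ (Fin n),
      (∀ t : ℝ, 0 ≤ t → HasDerivAt x (toEuclideanLin A (x t)) t) →
      ∀ t : ℝ, 0 ≤ t → ‖x t‖ ≤ Real.exp (t * mu2 A) * ‖x 0‖ :=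
    fun x hx t ht => norm_le_exp_mul_norm_of_inner_deriv_le hx
      (fun s _ => inner_toEuclideanLin_le_mu2 A (x s)) ht
  refine ⟨fun t ht v => ?_, solution_bound⟩
  simpa using solution_bound _ (fun s _ => hasDerivAt_toEuclideanLin_exp_smul_apply A v s) t ht
end

section
/- Lemma 3 (realizability of off-policy solutions by a model pair): Let P̂ be a real symmetric invertible q×q matrix, Q̂ a real symmetric q×q matrix, R̃ a real symmetric invertible m×m matrix, and K̂_j, K̂_{j+1} real m×q matrices. Then there exist a real q×q matrix Â and a real q×m matrix B̂ such that (Â − B̂ K̂_j)ᵀ P̂ + P̂ (Â − B̂ K̂_j) + Q̂ = 0 and K̂_{j+1} = R̃⁻¹ B̂ᵀ P̂. In particular, B̂ = P̂⁻¹ K̂_{j+1}ᵀ R̃ and Â = −(1/2) P̂⁻¹ Q̂ + B̂ K̂_j satisfy both equations. -/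
open Matrix

/-- Lemma 3: realizability of off-policy solutions by a model pair:
for symmetric invertible `P̂`, symmetric `Q̂`, symmetric invertible `R̃` and gains
`K̂_j, K̂_{j+1}`, there exist `Â, B̂` with
`(Â − B̂K̂_j)ᵀ P̂ + P̂(Â − B̂K̂_j) + Q̂ = 0` and `K̂_{j+1} = R̃⁻¹ B̂ᵀ P̂`; in particular
`B̂ = P̂⁻¹ K̂_{j+1}ᵀ R̃` and `Â = −(1/2) P̂⁻¹ Q̂ + B̂ K̂_j` satisfy both equations. -/
theorem offpolicy_solution_realizable {q m : ℕ}
    (Phat Qhat : Matrix (Fin q) (Fin q) ℝ)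
    (Rtilde : Matrix (Fin m) (Fin m) ℝ)
    (Kj Kj1 : Matrix (Fin m) (Fin q) ℝ)
    (hPsym : Phat.IsHermitian) (hPinv : IsUnit Phat.det)
    (hQsym : Qhat.IsHermitian)
    (hRsym : Rtilde.IsHermitian) (hRinv : IsUnit Rtilde.det) :
    ∃ (Ahat : Matrix (Fin q) (Fin q) ℝ) (Bhat : Matrix (Fin q) (Fin m) ℝ),
      (Ahat - Bhat * Kj)ᵀ * Phat + Phat * (Ahat - Bhat * Kj) + Qhat = 0 ∧
      Kj1 = Rtilde⁻¹ * Bhatᵀ * Phat ∧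
      Bhat = Phat⁻¹ * Kj1ᵀ * Rtilde ∧
      Ahat = -((1 / 2 : ℝ) • (Phat⁻¹ * Qhat)) + Bhat * Kj := by

  have hPsym' : Phatᵀ = Phat := hPsym
  have hQsym' : Qhatᵀ = Qhat := hQsym
  have hRsym' : Rtildeᵀ = Rtilde := hRsym
  have hPinvT : (Phat⁻¹)ᵀ = Phat⁻¹ := by
    rw [Matrix.transpose_nonsing_inv, hPsym']
  refine ⟨-((1 / 2 : ℝ) • (Phat⁻¹ * Qhat)) + (Phat⁻¹ * Kj1ᵀ * Rtilde) * Kj,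
    Phat⁻¹ * Kj1ᵀ * Rtilde, ?_, ?_, rfl, rfl⟩
  · have h1 : -((1 / 2 : ℝ) • (Phat⁻¹ * Qhat)) + Phat⁻¹ * Kj1ᵀ * Rtilde * Kj -
        Phat⁻¹ * Kj1ᵀ * Rtilde * Kj = -((1 / 2 : ℝ) • (Phat⁻¹ * Qhat)) := by abel
    rw [h1]
    rw [Matrix.transpose_neg, Matrix.transpose_smul, Matrix.transpose_mul, hQsym', hPinvT]
    rw [Matrix.neg_mul, Matrix.mul_neg, Matrix.smul_mul, Matrix.mul_smul]
    rw [Matrix.mul_assoc Qhat, Matrix.nonsing_inv_mul _ hPinv, Matrix.mul_one]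
    rw [← Matrix.mul_assoc Phat, Matrix.mul_nonsing_inv _ hPinv, Matrix.one_mul]
    ext i j
    simp [Matrix.add_apply, Matrix.neg_apply, Matrix.smul_apply]
    ring
  · rw [Matrix.transpose_mul, Matrix.transpose_mul, hRsym', Matrix.transpose_transpose, hPinvT]
    rw [← Matrix.mul_assoc, ← Matrix.mul_assoc, Matrix.nonsing_inv_mul _ hRinv, Matrix.one_mul,
      Matrix.mul_assoc, Matrix.nonsing_inv_mul _ hPinv, Matrix.mul_one]
end

section
/- Kleinman policy-improvement preserves stability: Let A be a real q×q matrix, B a real q×m matrix, Q a real symmetric positive definite q×q matrix, and R a real symmetric positive definite m×m matrix. Suppose K is a real m×q matrix such that A − BK is Hurwitz, and let P be a real symmetric matrix solving the Lyapunov equation (A − BK)ᵀ P + P (A − BK) + Q + Kᵀ R K = 0. Then the updated gain K' = R⁻¹ Bᵀ P makes A − BK' Hurwitz. -/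
/-!
If `A_K = A - BK` is Hurwitz, the Lyapunov equation forces `P ≻ 0`. Indeed, the Cayley
transform `F = (1 + A_K)(1 - A_K)⁻¹` has spectrum inside the unit disc, so `Fᴺ → 0` by Gelfand's
formula, while the quadratic form of `P` strictly decreases along `x ↦ F x`; a form that
decreases along a sequence tending to `0` is positive.

Completing the square with `K' = R⁻¹BᵀP` turns the Lyapunov equation of `K` into
`(A - BK')ᵀP + P(A - BK') = -(Q + (K' - K)ᵀR(K' - K) + K'ᵀRK')`, whose right-hand side is
negative definite. For an eigenvector `v` of `A - BK'` with eigenvalue `μ` this reads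
`2 Re μ · v*Pv = -v*(Q + …)v < 0`, so `Re μ < 0`.
-/

open Matrix

open Filter Topology
open scoped ComplexOrder

theorem tendsto_pow_atTop_nhds_zero_of_forall_norm_lt_one {A : Type*} [NormedRing A]
    [NormedAlgebra ℂ A] [CompleteSpace A] {a : A} (h : ∀ z ∈ spectrum ℂ a, ‖z‖ < 1) :
    Tendsto (a ^ ·) atTop (𝓝 0) := by
  have hρ : spectralRadius ℂ a < 1 := by
    rcases (spectrum ℂ a).eq_empty_or_nonempty with he | hne
    · simp [spectralRadius, he]
    · exact spectrum.spectralRadius_lt_of_forall_lt_of_nonempty hne fun z hz => by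
        simpa [← NNReal.coe_lt_coe] using h z hz
  obtain ⟨r, hr0, hρr, hr1⟩ := ENNReal.lt_iff_exists_real_btwn.mp hρ
  have hbound : ∀ᶠ N : ℕ in atTop, ‖a ^ N‖ ≤ r ^ N := by
    filter_upwards [(spectrum.pow_norm_pow_one_div_tendsto_nhds_spectralRadius a).eventually_lt_const
        hρr, eventually_ne_atTop 0] with N hN hN0
    rw [ENNReal.ofReal_lt_ofReal_iff_of_nonneg (by positivity), one_div] at hN
    calc ‖a ^ N‖ = (‖a ^ N‖ ^ (N : ℝ)⁻¹) ^ N :=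
          (Real.rpow_inv_natCast_pow (norm_nonneg _) hN0).symm
      _ ≤ r ^ N := by gcongr
  exact squeeze_zero_norm' hbound
    (tendsto_pow_atTop_nhds_zero_of_lt_one hr0 (by simpa using hr1))

theorem Complex.norm_one_add_lt_norm_one_sub {μ : ℂ} (hμ : μ.re < 0) : ‖1 + μ‖ < ‖1 - μ‖ := by
  rw [← sq_lt_sq₀ (norm_nonneg _) (norm_nonneg _), Complex.sq_norm, Complex.sq_norm,
    Complex.normSq_apply, Complex.normSq_apply]
  simp only [Complex.add_re, Complex.add_im, Complex.sub_re, Complex.sub_im, Complex.one_re,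
    Complex.one_im]
  nlinarith

section CayleyTransform

variable {A : Type*} [Ring A] [Algebra ℂ A] {a : A}

theorem isUnit_one_sub_of_forall_re_lt_zero (ha : ∀ μ ∈ spectrum ℂ a, μ.re < 0) :
    IsUnit (1 - a) := by
  simpa using spectrum.notMem_iff.mp fun h => (ha 1 h).not_ge zero_le_one

theorem norm_lt_one_of_mem_spectrum_of_mul_one_sub_eq {c : A}
    (ha : ∀ μ ∈ spectrum ℂ a, μ.re < 0) (hc : c * (1 - a) = 1 + a) {ν : ℂ}
    (hν : ν ∈ spectrum ℂ c) : ‖ν‖ < 1 := by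
  obtain ⟨u, hu⟩ := isUnit_one_sub_of_forall_re_lt_zero ha
  have key : (algebraMap ℂ A ν - c) * u = (ν - 1) • 1 - (ν + 1) • a := by
    rw [hu, sub_mul, hc, Algebra.algebraMap_eq_smul_one]
    simp only [smul_mul_assoc, one_mul, mul_sub, mul_one, sub_smul, add_smul, one_smul]
    abel
  rw [spectrum.mem_iff, ← Units.isUnit_mul_units _ u, key] at hν
  have hν1 : ν + 1 ≠ 0 := by
    rintro h
    rw [h, zero_smul, sub_zero, show ν - 1 = -2 by linear_combination h] at hν
    exact hν ((isUnit_smul_iff (Units.mk0 (-2 : ℂ) (by norm_num)) (1 : A)).mpr isUnit_one)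
  set μ := (ν - 1) / (ν + 1)
  have hμ : μ ∈ spectrum ℂ a := by
    refine spectrum.mem_iff.mpr fun hunit => hν ?_
    have : (ν - 1) • (1 : A) - (ν + 1) • a
        = Units.mk0 (ν + 1) hν1 • (algebraMap ℂ A μ - a) := by
      rw [Units.smul_mk0, Algebra.algebraMap_eq_smul_one, smul_sub, smul_smul,
        mul_div_cancel₀ _ hν1]
    rwa [this, isUnit_smul_iff]
  have hνμ : ν * (1 - μ) = 1 + μ := by
    simp only [μ]
    field_simp
    ring
  have h1μ : 0 < ‖1 - μ‖ := by
    refine norm_pos_iff.mpr fun h => ?_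
    have := ha μ hμ
    rw [show μ = 1 by linear_combination -h] at this
    norm_num at this
  have := Complex.norm_one_add_lt_norm_one_sub (ha μ hμ)
  rw [← hνμ, norm_mul] at this
  exact (mul_lt_iff_lt_one_left h1μ).mp this

end CayleyTransform

section

variable {n : Type*} [Fintype n]

theorem Matrix.exists_mulVec_eq_smul_of_mem_spectrum [DecidableEq n] {K : Type*} [Field K]
    {M : Matrix n n K} {μ : K} (hμ : μ ∈ spectrum K M) : ∃ v ≠ 0, M *ᵥ v = μ • v := by
  rw [← Matrix.spectrum_toLin', ← Module.End.hasEigenvalue_iff_mem_spectrum] at hμ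
  obtain ⟨v, hv⟩ := hμ.exists_hasEigenvector
  exact ⟨v, hv.2, hv.apply_eq_smul⟩

theorem re_lt_zero_of_mem_spectrum_of_lyapunov [DecidableEq n] {A P S : Matrix n n ℂ}
    (hP : P.PosDef) (hS : S.PosDef) (h : Aᴴ * P + P * A = -S) {μ : ℂ}
    (hμ : μ ∈ spectrum ℂ A) : μ.re < 0 := by
  obtain ⟨v, hv, hAv⟩ := exists_mulVec_eq_smul_of_mem_spectrum hμ
  have key : star v ⬝ᵥ (Aᴴ * P + P * A) *ᵥ v
      = (μ + starRingEnd ℂ μ) * (star v ⬝ᵥ P *ᵥ v) := by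
    rw [add_mulVec, dotProduct_add, ← mulVec_mulVec, dotProduct_mulVec, ← star_mulVec,
      ← mulVec_mulVec, hAv, star_smul, smul_dotProduct, mulVec_smul, dotProduct_smul]
    simp only [smul_eq_mul, Complex.star_def]
    ring
  have hre := congrArg Complex.re key
  rw [h, neg_mulVec, dotProduct_neg, Complex.neg_re, Complex.add_conj,
    Complex.re_ofReal_mul] at hre
  have hPpos := hP.re_dotProduct_pos hv
  have hSpos := hS.re_dotProduct_pos hv
  simp only [RCLike.re_to_complex] at hPpos hSpos
  nlinarith

theorem Matrix.re_star_dotProduct_map_ofReal_mulVec (M : Matrix n n ℝ) (x : n → ℂ) :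
    (star x ⬝ᵥ M.map (↑) *ᵥ x).re =
      (fun i => (x i).re) ⬝ᵥ M *ᵥ (fun i => (x i).re)
        + (fun i => (x i).im) ⬝ᵥ M *ᵥ (fun i => (x i).im) := by
  simp only [dotProduct, mulVec, Pi.star_apply, map_apply, Finset.mul_sum, Complex.re_sum,
    ← Finset.sum_add_distrib]
  refine Finset.sum_congr rfl fun i _ => Finset.sum_congr rfl fun j _ => ?_
  simp [Complex.mul_re, Complex.mul_im]

theorem Matrix.PosDef.map_ofReal {M : Matrix n n ℝ} (hM : M.PosDef) :
    (M.map ((↑) : ℝ → ℂ)).PosDef := by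
  have hMc : (M.map ((↑) : ℝ → ℂ)).IsHermitian := hM.isHermitian.map _ fun _ => by simp
  refine .of_dotProduct_mulVec_pos hMc fun x hx =>
    RCLike.pos_iff.mpr ⟨?_, hMc.im_star_dotProduct_mulVec_self x⟩
  simp only [RCLike.re_to_complex, re_star_dotProduct_map_ofReal_mulVec]
  have hre := hM.posSemidef.dotProduct_mulVec_nonneg (fun i => (x i).re)
  have him := hM.posSemidef.dotProduct_mulVec_nonneg (fun i => (x i).im)
  simp only [star_trivial] at hre him
  by_cases h : (fun i => (x i).re) = 0
  · have : (fun i => (x i).im) ≠ 0 := fun h' =>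
      hx (funext fun i => Complex.ext (congrFun h i) (congrFun h' i))
    have := hM.dotProduct_mulVec_pos this
    simp only [star_trivial] at this
    linarith
  · have := hM.dotProduct_mulVec_pos h
    simp only [star_trivial] at this
    linarith

end

theorem Matrix.dotProduct_mulVec_one_sub_mulVec {n α : Type*} [Fintype n] [DecidableEq n]
    [CommRing α] (M P : Matrix n n α) (y : n → α) :
    (1 - M) *ᵥ y ⬝ᵥ P *ᵥ ((1 - M) *ᵥ y) =
      (1 + M) *ᵥ y ⬝ᵥ P *ᵥ ((1 + M) *ᵥ y) - 2 * (y ⬝ᵥ (Mᵀ * P + P * M) *ᵥ y) := by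
  simp only [sub_mulVec, add_mulVec, one_mulVec, mulVec_sub, mulVec_add, sub_dotProduct,
    add_dotProduct, dotProduct_sub, dotProduct_add, ← mulVec_mulVec, dotProduct_mulVec _ Mᵀ,
    vecMul_transpose]
  ring

section RealLyapunov

variable {n : ℕ} {A P S : Matrix (Fin n) (Fin n) ℝ}

theorem IsHurwitz.isUnit_one_sub (hA : IsHurwitz A) : IsUnit (1 - A) := by
  have h := isUnit_one_sub_of_forall_re_lt_zero hA
  have : 1 - A.map (Complex.ofReal ·) = Complex.ofRealHom.mapMatrix (1 - A) := by
    rw [map_sub, map_one]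
    rfl
  rw [this, isUnit_iff_isUnit_det, ← RingHom.map_det, isUnit_map_iff] at h
  exact (isUnit_iff_isUnit_det _).mpr h

theorem IsHurwitz.tendsto_pow_of_mul_one_sub_eq (hA : IsHurwitz A)
    {F : Matrix (Fin n) (Fin n) ℝ} (hF : F * (1 - A) = 1 + A) :
    Tendsto (F ^ ·) atTop (𝓝 0) := by
  let _ : NormedRing (Matrix (Fin n) (Fin n) ℂ) := Matrix.linftyOpNormedRing
  let _ : NormedAlgebra ℂ (Matrix (Fin n) (Fin n) ℂ) := Matrix.linftyOpNormedAlgebra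
  have hFc : F.map Complex.ofRealHom * (1 - A.map Complex.ofRealHom)
      = 1 + A.map Complex.ofRealHom := by
    simpa [Matrix.map_mul, Matrix.map_sub, Matrix.map_add] using
      congrArg (·.map Complex.ofRealHom) hF
  have hc := tendsto_pow_atTop_nhds_zero_of_forall_norm_lt_one fun ν hν =>
    norm_lt_one_of_mem_spectrum_of_mul_one_sub_eq hA hFc hν
  have hre := ((continuous_id.matrix_map Complex.continuous_re).tendsto 0).comp hc
  simpa [Function.comp_def, ← Matrix.map_pow, Matrix.map_map] using hre

theorem IsHurwitz.posDef_of_lyapunov (hA : IsHurwitz A) (hP : P.IsHermitian) (hS : S.PosDef)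
    (h : Aᵀ * P + P * A = -S) : P.PosDef := by
  have hdet : IsUnit (1 - A).det := (isUnit_iff_isUnit_det _).mp hA.isUnit_one_sub
  set F := (1 + A) * (1 - A)⁻¹
  have hF : F * (1 - A) = 1 + A := by simp only [F, mul_assoc, nonsing_inv_mul _ hdet, mul_one]
  have hdrop : ∀ x, F *ᵥ x ⬝ᵥ P *ᵥ (F *ᵥ x)
      + 2 * ((1 - A)⁻¹ *ᵥ x ⬝ᵥ S *ᵥ ((1 - A)⁻¹ *ᵥ x)) = x ⬝ᵥ P *ᵥ x := by
    intro x
    obtain ⟨y, rfl⟩ : ∃ y, (1 - A) *ᵥ y = x :=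
      ⟨(1 - A)⁻¹ *ᵥ x, by rw [mulVec_mulVec, mul_nonsing_inv _ hdet, one_mulVec]⟩
    rw [mulVec_mulVec (M := F), hF, mulVec_mulVec (M := (1 - A)⁻¹), nonsing_inv_mul _ hdet,
      one_mulVec, dotProduct_mulVec_one_sub_mulVec, h, neg_mulVec, dotProduct_neg]
    ring
  have hmono : ∀ x, F *ᵥ x ⬝ᵥ P *ᵥ (F *ᵥ x) ≤ x ⬝ᵥ P *ᵥ x := fun x => by
    have := hS.posSemidef.dotProduct_mulVec_nonneg ((1 - A)⁻¹ *ᵥ x)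
    rw [star_trivial] at this
    linarith [hdrop x]
  refine .of_dotProduct_mulVec_pos hP fun x hx => ?_
  let u : ℕ → ℝ := fun N => F ^ N *ᵥ x ⬝ᵥ P *ᵥ (F ^ N *ᵥ x)
  have hu : Antitone u := antitone_nat_of_succ_le fun N => by
    simpa only [u, pow_succ', ← mulVec_mulVec] using hmono (F ^ N *ᵥ x)
  have hu0 : Tendsto u atTop (𝓝 0) := by
    have : Continuous fun M : Matrix (Fin n) (Fin n) ℝ => M *ᵥ x ⬝ᵥ P *ᵥ (M *ᵥ x) := by
      fun_prop
    have h0 := (this.tendsto 0).comp (hA.tendsto_pow_of_mul_one_sub_eq hF)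
    rwa [zero_mulVec, zero_dotProduct] at h0
  have hFx : 0 ≤ F *ᵥ x ⬝ᵥ P *ᵥ (F *ᵥ x) := by simpa [u] using hu.le_of_tendsto hu0 1
  have hy : (1 - A)⁻¹ *ᵥ x ≠ 0 := fun hy => hx <| by
    rw [← one_mulVec x, ← mul_nonsing_inv _ hdet, ← mulVec_mulVec, hy, mulVec_zero]
  have := hS.dotProduct_mulVec_pos hy
  rw [star_trivial] at this ⊢
  linarith [hdrop x]

theorem isHurwitz_of_lyapunov (hP : P.PosDef) (hS : S.PosDef) (h : Aᵀ * P + P * A = -S) :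
    IsHurwitz A := fun _ hμ =>
  re_lt_zero_of_mem_spectrum_of_lyapunov hP.map_ofReal hS.map_ofReal (by
    have hT : Complex.ofRealHom.mapMatrix Aᵀ = (A.map (Complex.ofReal ·))ᴴ := by ext; simp
    have := congrArg Complex.ofRealHom.mapMatrix h
    rwa [map_add, map_mul, map_mul, map_neg, hT] at this) hμ

end RealLyapunov

theorem kleinman_lyapunov_identity {ι κ α : Type*} [Fintype ι] [Fintype κ] [CommRing α]
    {A Q P : Matrix ι ι α} {B : Matrix ι κ α} {R : Matrix κ κ α}
    {K L : Matrix κ ι α} (hR : Rᵀ = R) (hP : Pᵀ = P) (hL : R * L = Bᵀ * P)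
    (h : (A - B * K)ᵀ * P + P * (A - B * K) + Q + Kᵀ * R * K = 0) :
    (A - B * L)ᵀ * P + P * (A - B * L) = -(Q + (L - K)ᵀ * R * (L - K) + Lᵀ * R * L) := by
  have hPB : P * B = Lᵀ * R := by
    simpa only [transpose_mul, transpose_transpose, hR, hP] using congrArg transpose hL.symm
  have expand : ∀ X : Matrix κ ι α, (A - B * X)ᵀ * P + P * (A - B * X)
      = Aᵀ * P + P * A - Xᵀ * (R * L) - Lᵀ * R * X := fun X => by
    rw [transpose_sub, transpose_mul, Matrix.sub_mul, Matrix.mul_sub, Matrix.mul_assoc Xᵀ, ← hL,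
      ← Matrix.mul_assoc P, hPB]
    abel
  rw [expand K] at h
  rw [expand L]
  rw [← sub_eq_zero, ← h]
  simp only [transpose_sub, Matrix.sub_mul, Matrix.mul_sub, Matrix.mul_assoc]
  abel

/-- Kleinman policy improvement preserves stability: if `A − BK` is Hurwitz and
the symmetric matrix `P` solves `(A − BK)ᵀP + P(A − BK) + Q + KᵀRK = 0` with `Q ≻ 0`, `R ≻ 0`,
then the updated gain `K' = R⁻¹BᵀP` makes `A − BK'` Hurwitz. -/
theorem kleinman_update_hurwitz {q m : ℕ}
    (A : Matrix (Fin q) (Fin q) ℝ) (B : Matrix (Fin q) (Fin m) ℝ)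
    (Q P : Matrix (Fin q) (Fin q) ℝ) (R : Matrix (Fin m) (Fin m) ℝ)
    (K : Matrix (Fin m) (Fin q) ℝ)
    (hQ : Q.PosDef) (hR : R.PosDef)
    (hK : IsHurwitz (A - B * K))
    (hPsym : P.IsHermitian)
    (hLyap : (A - B * K)ᵀ * P + P * (A - B * K) + Q + Kᵀ * R * K = 0) :
    IsHurwitz (A - B * (R⁻¹ * Bᵀ * P)) := by
  have hPt : Pᵀ = P := by rw [← conjTranspose_eq_transpose_of_trivial, hPsym.eq]
  have hRt : Rᵀ = R := by rw [← conjTranspose_eq_transpose_of_trivial, hR.isHermitian.eq]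
  have hRK : ∀ X : Matrix (Fin m) (Fin q) ℝ, (Xᵀ * R * X).PosSemidef := fun X => by
    simpa only [conjTranspose_eq_transpose_of_trivial] using
      hR.posSemidef.conjTranspose_mul_mul_same X
  have hP : P.PosDef := hK.posDef_of_lyapunov hPsym (hQ.add_posSemidef (hRK K))
    (eq_neg_of_add_eq_zero_left (by rwa [← add_assoc]))
  have hL : R * (R⁻¹ * Bᵀ * P) = Bᵀ * P := by
    rw [Matrix.mul_assoc,
      mul_nonsing_inv_cancel_left _ _ ((isUnit_iff_isUnit_det R).mp hR.isUnit)]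
  exact isHurwitz_of_lyapunov hP ((hQ.add_posSemidef (hRK _)).add_posSemidef (hRK _))
    (kleinman_lyapunov_identity hRt hPt hL hLyap)
end

section
/- Kleinman monotonicity: Let A be a real q×q matrix, B a real q×m matrix, Q real symmetric positive definite q×q, and R real symmetric positive definite m×m. Let K be a real m×q matrix with A − BK Hurwitz, let P be the symmetric solution of (A − BK)ᵀ P + P (A − BK) + Q + Kᵀ R K = 0, set K' = R⁻¹ Bᵀ P, assume A − BK' is Hurwitz, and let P' be the symmetric solution of (A − BK')ᵀ P' + P' (A − BK') + Q + K'ᵀ R K' = 0. Then P' ⪯ P, i.e., P − P' is positive semidefinite. -/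
open Matrix

/-!
With `A' = A - BK'`, subtracting the two Lyapunov equations and using `RK' = BᵀP` gives
`A'ᵀ(P - P') + (P - P')A' = -(K - K')ᵀR(K - K')`, so it suffices that the solution `X` of
`HᵀX + XH = -T` is positive semidefinite whenever `H` is Hurwitz and `T` is.

For `T` positive definite, deform `H` to `-1` along the Hurwitz matrices `(1 - s)H - s`. Since the
spectra of `Hᵀ` and `-H` are disjoint, the Lyapunov operator `Y ↦ HᵀY + YH` stays invertible, so the
solution `X_s` is unique, symmetric and continuous in `s`; it is moreover nonsingular because `T` is
positive definite. A continuous path of nonsingular symmetric matrices cannot leave the (open and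
closed) set of positive definite ones, and `X_1 = T/2`. The semidefinite case follows by replacing
`T` with `T + ε`.
-/

open scoped Kronecker

theorem Matrix.eq_zero_of_mul_eq_mul_of_disjoint_spectrum {𝕜 m n : Type*} [Field 𝕜]
    [IsAlgClosed 𝕜] [Fintype m] [DecidableEq m] [Fintype n] [DecidableEq n]
    {A : Matrix m m 𝕜} {B : Matrix n n 𝕜} {Y : Matrix m n 𝕜}
    (hAB : Disjoint (spectrum 𝕜 A) (spectrum 𝕜 B)) (hY : A * Y = Y * B) : Y = 0 := by
  cases isEmpty_or_nonempty n
  · exact Subsingleton.elim _ _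
  have hpow (k : ℕ) : A ^ k * Y = Y * B ^ k := by
    induction k with
    | zero => simp
    | succ k ih => rw [pow_succ', pow_succ', Matrix.mul_assoc, ih, ← Matrix.mul_assoc, hY,
        Matrix.mul_assoc]
  have haeval : Polynomial.aeval A B.charpoly * Y = 0 := by
    rw [Polynomial.aeval_eq_sum_range, Matrix.sum_mul]
    simp_rw [Matrix.smul_mul, hpow, ← Matrix.mul_smul, ← Matrix.mul_sum,
      ← Polynomial.aeval_eq_sum_range, aeval_self_charpoly, Matrix.mul_zero]
  -- the roots of `B.charpoly` form the spectrum of `B`, so none of them is an eigenvalue of `A`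
  have hunit : IsUnit (Polynomial.aeval A B.charpoly) := by
    rw [← spectrum.zero_notMem_iff 𝕜, spectrum.map_polynomial_aeval_of_degree_pos]
    · rintro ⟨k, hkA, hk⟩
      exact hAB.ne_of_mem hkA (mem_spectrum_iff_isRoot_charpoly.mpr hk) rfl
    · rw [charpoly_degree_eq_dim]
      exact_mod_cast Fintype.card_pos
  rw [← nonsing_inv_mul_cancel_left (A := Polynomial.aeval A B.charpoly) Y
    ((isUnit_iff_isUnit_det _).mp hunit), haeval, Matrix.mul_zero]

theorem Matrix.spectrum_transpose {𝕜 n : Type*} [Field 𝕜] [Fintype n] [DecidableEq n]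
    (A : Matrix n n 𝕜) : spectrum 𝕜 Aᵀ = spectrum 𝕜 A := by
  ext μ
  simp only [mem_spectrum_iff_isRoot_charpoly, charpoly_transpose]

theorem IsHurwitz.smul_sub_smul_one {n : ℕ} {H : Matrix (Fin n) (Fin n) ℝ} (hH : IsHurwitz H)
    {a b : ℝ} (ha : 0 ≤ a) (hb : 0 ≤ b) (hab : 0 < a + b) : IsHurwitz (a • H - b • 1) := by
  intro μ hμ
  have hmap : (a • H - b • 1).map (Complex.ofReal ·)
      = (a : ℂ) • H.map (Complex.ofReal ·) - algebraMap ℂ _ (b : ℂ) := by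
    ext i j
    by_cases h : i = j <;> simp [algebraMap_matrix_apply, h]
  rw [hmap, ← spectrum.sub_singleton_eq] at hμ
  obtain ⟨ν, hν, _, rfl, rfl⟩ := hμ
  rcases ha.eq_or_lt with rfl | ha
  · rcases subsingleton_or_nontrivial (Matrix (Fin n) (Fin n) ℂ) with _ | _
    · simp [spectrum.of_subsingleton] at hν
    · simp only [Complex.ofReal_zero, zero_smul, spectrum.zero_eq, Set.mem_singleton_iff] at hν
      simp only [hν, Complex.sub_re, Complex.zero_re, Complex.ofReal_re]
      linarith
  · have ha' : (a : ℂ) ≠ 0 := by exact_mod_cast ha.ne'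
    rw [show (a : ℂ) • H.map (Complex.ofReal ·) = (Units.mk0 _ ha') • H.map (Complex.ofReal ·)
      from rfl, spectrum.unit_smul_eq_smul] at hν
    obtain ⟨ν, hν, rfl⟩ := hν
    have := hH ν hν
    simp only [Units.val_mk0, smul_eq_mul, Complex.sub_re, Complex.mul_re, Complex.ofReal_re,
      Complex.ofReal_im, zero_mul, sub_zero]
    nlinarith

theorem IsHurwitz.eq_zero_of_transpose_mul_add_mul_eq_zero {n : ℕ}
    {H Y : Matrix (Fin n) (Fin n) ℝ} (hH : IsHurwitz H) (hY : Hᵀ * Y + Y * H = 0) : Y = 0 := by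
  set Hc := H.map Complex.ofRealHom
  have hYc : Hcᵀ * Y.map Complex.ofRealHom = Y.map Complex.ofRealHom * -Hc := by
    rw [Matrix.mul_neg, ← add_eq_zero_iff_eq_neg, ← transpose_map, ← Matrix.map_mul,
      ← Matrix.map_mul, ← Matrix.map_add _ (map_add Complex.ofRealHom), hY,
      Matrix.map_zero _ (map_zero _)]
  have hdisj : Disjoint (spectrum ℂ Hcᵀ) (spectrum ℂ (-Hc)) := by
    rw [spectrum_transpose, ← spectrum.neg_eq, Set.disjoint_left]
    intro μ hμ hμneg
    have hre := hH (-μ) hμneg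
    rw [Complex.neg_re] at hre
    linarith [hH μ hμ]
  refine map_injective Complex.ofRealHom.injective ?_
  change Y.map Complex.ofRealHom = (0 : Matrix _ _ ℝ).map Complex.ofRealHom
  rw [eq_zero_of_mul_eq_mul_of_disjoint_spectrum hdisj hYc, Matrix.map_zero _ (map_zero _)]

namespace Matrix

def lyapunovMatrix {R n : Type*} [Fintype n] [DecidableEq n] [CommRing R] (H : Matrix n n R) :
    Matrix (n × n) (n × n) R :=
  1 ⊗ₖ Hᵀ + Hᵀ ⊗ₖ 1

theorem lyapunovMatrix_mulVec_vec {R n : Type*} [Fintype n] [DecidableEq n] [CommRing R]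
    (H Y : Matrix n n R) : lyapunovMatrix H *ᵥ vec Y = vec (Hᵀ * Y + Y * H) := by
  rw [lyapunovMatrix, add_mulVec, kronecker_mulVec_vec, kronecker_mulVec_vec, transpose_one,
    transpose_transpose, Matrix.mul_one, Matrix.one_mul, vec_add]

end Matrix

theorem Continuous.matrix_lyapunovMatrix {X R n : Type*} [Fintype n] [DecidableEq n]
    [TopologicalSpace X] [CommRing R] [TopologicalSpace R] [IsTopologicalRing R]
    {H : X → Matrix n n R} (hH : Continuous H) : Continuous fun x => lyapunovMatrix (H x) := by
  refine continuous_matrix fun p r => ?_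
  simp only [lyapunovMatrix, Matrix.add_apply, kroneckerMap_apply, transpose_apply]
  fun_prop

theorem Continuous.matrix_inv {X 𝕜 n : Type*} [Fintype n] [DecidableEq n] [TopologicalSpace X]
    [Field 𝕜] [TopologicalSpace 𝕜] [IsTopologicalDivisionRing 𝕜]
    {A : X → Matrix n n 𝕜} (hA : Continuous A) (hdet : ∀ x, (A x).det ≠ 0) :
    Continuous fun x => (A x)⁻¹ := by
  refine continuous_iff_continuousAt.mpr fun x =>
    (continuousAt_matrix_inv _ ?_).comp hA.continuousAt
  rw [Ring.inverse_eq_inv']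
  exact continuousAt_inv₀ (hdet x)

theorem IsHurwitz.isUnit_lyapunovMatrix {n : ℕ} {H : Matrix (Fin n) (Fin n) ℝ}
    (hH : IsHurwitz H) : IsUnit (lyapunovMatrix H) := by
  rw [← mulVec_injective_iff_isUnit]
  refine (injective_iff_map_eq_zero (mulVecLin (lyapunovMatrix H))).mpr fun v hv => ?_
  obtain ⟨Y, rfl⟩ := vec_bijective.surjective v
  rw [mulVecLin_apply, lyapunovMatrix_mulVec_vec, ← vec_zero, vec_inj] at hv
  rw [hH.eq_zero_of_transpose_mul_add_mul_eq_zero hv, vec_zero]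

theorem exists_continuous_lyapunov_solution {X : Type*} [TopologicalSpace X] {n : ℕ}
    {H : X → Matrix (Fin n) (Fin n) ℝ} (hH : Continuous H) (hHur : ∀ x, IsHurwitz (H x))
    (T : Matrix (Fin n) (Fin n) ℝ) :
    ∃ g : X → Matrix (Fin n) (Fin n) ℝ, Continuous g ∧ ∀ x, (H x)ᵀ * g x + g x * H x = T := by
  set L := fun x => lyapunovMatrix (H x)
  have hunit (x : X) : IsUnit (L x).det :=
    (isUnit_iff_isUnit_det _).mp (hHur x).isUnit_lyapunovMatrix
  choose g hg using fun x => vec_bijective.surjective ((L x)⁻¹ *ᵥ vec T)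
  refine ⟨g, continuous_matrix fun i j => ?_, fun x => ?_⟩
  · have hgij : (fun x => g x i j) = fun x => ((L x)⁻¹ *ᵥ vec T) (j, i) :=
      funext fun x => by rw [← hg]; rfl
    rw [hgij]
    exact (continuous_apply (j, i)).comp
      ((hH.matrix_lyapunovMatrix.matrix_inv fun x => (hunit x).ne_zero).matrix_mulVec
        continuous_const)
  · rw [← vec_inj, ← lyapunovMatrix_mulVec_vec, hg, mulVec_mulVec, mul_nonsing_inv _ (hunit x),
      one_mulVec]

theorem IsHurwitz.exists_lyapunov {n : ℕ} {H : Matrix (Fin n) (Fin n) ℝ} (hH : IsHurwitz H)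
    (T : Matrix (Fin n) (Fin n) ℝ) : ∃ X, Hᵀ * X + X * H = T :=
  let ⟨g, _, hg⟩ := exists_continuous_lyapunov_solution (X := Unit) continuous_const (fun _ => hH) T
  ⟨g (), hg ()⟩

theorem IsHurwitz.eq_of_lyapunov_eq {n : ℕ} {H X Y : Matrix (Fin n) (Fin n) ℝ} (hH : IsHurwitz H)
    (h : Hᵀ * X + X * H = Hᵀ * Y + Y * H) : X = Y :=
  sub_eq_zero.mp <| hH.eq_zero_of_transpose_mul_add_mul_eq_zero <| by
    rw [Matrix.mul_sub, Matrix.sub_mul, sub_add_sub_comm, h, sub_self]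

theorem IsHurwitz.isSymm_of_lyapunov {n : ℕ} {H X T : Matrix (Fin n) (Fin n) ℝ} (hH : IsHurwitz H)
    (hT : T.IsSymm) (h : Hᵀ * X + X * H = T) : X.IsSymm :=
  hH.eq_of_lyapunov_eq <| by
    rw [h, ← hT.eq, ← h, transpose_add, transpose_mul, transpose_mul, transpose_transpose, add_comm]

theorem Matrix.exists_mem_sphere_dotProduct_mulVec_nonpos {n : Type*} [Fintype n]
    {M : Matrix n n ℝ} (hM : M.IsHermitian) (h : ¬M.PosDef) :
    ∃ v ∈ Metric.sphere (0 : n → ℝ) 1, v ⬝ᵥ (M *ᵥ v) ≤ 0 := by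
  simp only [posDef_iff_dotProduct_mulVec, hM, true_and, not_forall, not_lt, star_trivial] at h
  obtain ⟨v, hv, hle⟩ := h
  refine ⟨‖v‖⁻¹ • v, by simp [norm_smul, norm_ne_zero_iff.mpr hv], ?_⟩
  rw [mulVec_smul, dotProduct_smul, smul_dotProduct, smul_smul]
  exact smul_nonpos_of_nonneg_of_nonpos (by positivity) hle

theorem Matrix.PosDef.of_preconnectedSpace {X n : Type*} [TopologicalSpace X]
    [PreconnectedSpace X] [Fintype n] [DecidableEq n] {f : X → Matrix n n ℝ} (hf : Continuous f)
    (hherm : ∀ x, (f x).IsHermitian) (hunit : ∀ x, IsUnit (f x)) {x₀ : X} (h₀ : (f x₀).PosDef)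
    (x : X) : (f x).PosDef := by
  set S := {x | (f x).PosDef}
  have hclosed : IsClosed S := by
    have hS : S = ⋂ v : n → ℝ, {x | 0 ≤ v ⬝ᵥ (f x *ᵥ v)} := by
      ext x
      simp only [S, Set.mem_ofPred_eq, Set.mem_iInter]
      refine ⟨fun h v => by simpa using h.posSemidef.dotProduct_mulVec_nonneg v, fun h => ?_⟩
      exact (PosSemidef.of_dotProduct_mulVec_nonneg (hherm x) (by simpa using h)).posDef_iff_isUnit
        |>.mpr (hunit x)
    rw [hS]
    exact isClosed_iInter fun v => isClosed_le continuous_const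
      (continuous_const.dotProduct (hf.matrix_mulVec continuous_const))
  -- the complement is the projection of a closed set along the compact unit sphere
  have hopen : IsOpen S := by
    have hS : Sᶜ = Prod.fst '' {p : X × Metric.sphere (0 : n → ℝ) 1 |
        (p.2 : n → ℝ) ⬝ᵥ (f p.1 *ᵥ p.2) ≤ 0} := by
      ext x
      constructor
      · intro hx
        obtain ⟨v, hv, hle⟩ := exists_mem_sphere_dotProduct_mulVec_nonpos (hherm x) hx
        exact ⟨(x, ⟨v, hv⟩), hle, rfl⟩
      · rintro ⟨⟨x, v, hv⟩, hle, rfl⟩ hx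
        have := hx.dotProduct_mulVec_pos (x := v) (ne_zero_of_mem_sphere one_ne_zero ⟨v, hv⟩)
        rw [star_trivial] at this
        exact (lt_of_lt_of_le this hle).false
    rw [← isClosed_compl_iff, hS]
    refine isClosedMap_fst_of_compactSpace _ (isClosed_le ?_ continuous_const)
    fun_prop
  exact Set.eq_univ_iff_forall.mp (IsClopen.eq_univ ⟨hclosed, hopen⟩ ⟨x₀, h₀⟩) x

theorem Matrix.isUnit_of_lyapunov {n : Type*} [Fintype n] [DecidableEq n] {H X T : Matrix n n ℝ}
    (hT : T.PosDef) (hX : X.IsSymm) (h : Hᵀ * X + X * H = -T) : IsUnit X := by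
  rw [← mulVec_injective_iff_isUnit]
  refine (injective_iff_map_eq_zero X.mulVecLin).mpr fun v hv => ?_
  rw [mulVecLin_apply] at hv
  by_contra hv0
  have hvX : v ᵥ* X = 0 := by rw [← hX.eq, vecMul_transpose, hv]
  have := hT.dotProduct_mulVec_pos hv0
  rw [star_trivial, ← neg_neg T, ← h, neg_mulVec, dotProduct_neg, add_mulVec, ← mulVec_mulVec,
    ← mulVec_mulVec, hv, mulVec_zero, zero_add, dotProduct_mulVec v X, hvX] at this
  simp at this

theorem IsHurwitz.posDef_of_lyapunov_s7 {n : ℕ} {H X T : Matrix (Fin n) (Fin n) ℝ}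
    (hH : IsHurwitz H) (hT : T.PosDef) (h : Hᵀ * X + X * H = -T) : X.PosDef := by
  set Hs : unitInterval → Matrix (Fin n) (Fin n) ℝ := fun s => (1 - (s : ℝ)) • H - (s : ℝ) • 1
  have hHs (s : unitInterval) : IsHurwitz (Hs s) :=
    hH.smul_sub_smul_one (sub_nonneg.mpr s.2.2) s.2.1 (by linarith)
  obtain ⟨g, hg, hgeq⟩ := exists_continuous_lyapunov_solution (by fun_prop) hHs (-T)
  have hgsymm (s : unitInterval) : (g s).IsSymm :=
    (hHs s).isSymm_of_lyapunov (isHermitian_iff_isSymm.mp hT.isHermitian).neg (hgeq s)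
  have hg0 : g 0 = X := (hHs 0).eq_of_lyapunov_eq <| by rw [hgeq]; simpa [Hs] using h.symm
  have hg1 : g 1 = (2⁻¹ : ℝ) • T := (hHs 1).eq_of_lyapunov_eq <| by
    rw [hgeq]
    simp only [Hs, Set.Icc.coe_one, sub_self, zero_smul, one_smul, zero_sub, transpose_neg,
      transpose_one, Algebra.mul_smul_comm, neg_mul, one_mul, smul_neg, mul_neg, mul_one]
    module
  rw [← hg0]
  refine PosDef.of_preconnectedSpace hg (fun s => isHermitian_iff_isSymm.mpr (hgsymm s))
    (fun s => isUnit_of_lyapunov hT (hgsymm s) (hgeq s)) (x₀ := 1) ?_ 0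
  rw [hg1]
  exact hT.smul (by norm_num)

open Filter Topology in
theorem IsHurwitz.posSemidef_of_lyapunov {n : ℕ} {H X T : Matrix (Fin n) (Fin n) ℝ}
    (hH : IsHurwitz H) (hT : T.PosSemidef) (h : Hᵀ * X + X * H = -T) : X.PosSemidef := by
  obtain ⟨Z, hZ⟩ := hH.exists_lyapunov (-1)
  have hpd (ε : ℝ) (hε : 0 < ε) : (X + ε • Z).PosDef :=
    hH.posDef_of_lyapunov_s7 (PosDef.posSemidef_add hT (PosDef.one.smul hε)) <| by
      rw [Matrix.mul_add, Matrix.add_mul, Matrix.mul_smul, Matrix.smul_mul, add_add_add_comm, h,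
        ← smul_add, hZ, neg_add, smul_neg]
  have hXsymm : X.IsSymm :=
    hH.isSymm_of_lyapunov (isHermitian_iff_isSymm.mp hT.isHermitian).neg h
  refine .of_dotProduct_mulVec_nonneg (isHermitian_iff_isSymm.mpr hXsymm) fun v => ?_
  have hlim : Tendsto (fun ε : ℝ => star v ⬝ᵥ ((X + ε • Z) *ᵥ v)) (𝓝[>] 0)
      (𝓝 (star v ⬝ᵥ (X *ᵥ v))) :=
    ((by fun_prop : Continuous fun ε : ℝ => star v ⬝ᵥ ((X + ε • Z) *ᵥ v)).tendsto' 0 _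
      (by simp)).mono_left nhdsWithin_le_nhds
  exact ge_of_tendsto hlim (eventually_nhdsWithin_of_forall fun ε hε =>
    (hpd ε hε).posSemidef.dotProduct_mulVec_nonneg v)

theorem Matrix.kleinman_lyapunov_sub {𝕜 m q : Type*} [CommRing 𝕜] [Fintype m] [Fintype q]
    {A P P' Q : Matrix q q 𝕜} {B : Matrix q m 𝕜} {R : Matrix m m 𝕜} {K K' : Matrix m q 𝕜}
    (hP : P.IsSymm) (hR : R.IsSymm) (hK' : R * K' = Bᵀ * P)
    (hLyap : (A - B * K)ᵀ * P + P * (A - B * K) + Q + Kᵀ * R * K = 0)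
    (hLyap' : (A - B * K')ᵀ * P' + P' * (A - B * K') + Q + K'ᵀ * R * K' = 0) :
    (A - B * K')ᵀ * (P - P') + (P - P') * (A - B * K') = -((K - K')ᵀ * R * (K - K')) := by
  have hPB : P * B = K'ᵀ * R := by
    rw [← hP.eq, ← hR.eq, ← transpose_mul, hK', transpose_mul, transpose_transpose]
  calc (A - B * K')ᵀ * (P - P') + (P - P') * (A - B * K')
      = ((A - B * K)ᵀ * P + P * (A - B * K) + Q + Kᵀ * R * K)
          - ((A - B * K')ᵀ * P' + P' * (A - B * K') + Q + K'ᵀ * R * K')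
          - (K - K')ᵀ * R * (K - K') + (K - K')ᵀ * (Bᵀ * P - R * K')
          + (P * B - K'ᵀ * R) * (K - K') := by
        simp only [transpose_sub, transpose_mul, Matrix.sub_mul, Matrix.mul_sub, Matrix.mul_assoc]
        abel
    _ = -((K - K')ᵀ * R * (K - K')) := by
        simp only [hLyap, hLyap', hK', hPB, sub_self, Matrix.mul_zero, Matrix.zero_mul, zero_sub,
          add_zero]

theorem kleinman_monotone_general {q m : ℕ}
    (A : Matrix (Fin q) (Fin q) ℝ) (B : Matrix (Fin q) (Fin m) ℝ)
    (Q P P' : Matrix (Fin q) (Fin q) ℝ) (R : Matrix (Fin m) (Fin m) ℝ)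
    (K K' : Matrix (Fin m) (Fin q) ℝ)
    (hR : R.PosDef)
    (hPsym : P.IsHermitian)
    (hLyap : (A - B * K)ᵀ * P + P * (A - B * K) + Q + Kᵀ * R * K = 0)
    (hK' : K' = R⁻¹ * Bᵀ * P)
    (hK'hurwitz : IsHurwitz (A - B * K'))
    (hLyap' : (A - B * K')ᵀ * P' + P' * (A - B * K') + Q + K'ᵀ * R * K' = 0) :
    (P - P').PosSemidef := by
  have hRK' : R * K' = Bᵀ * P := by
    rw [hK', Matrix.mul_assoc,
      mul_nonsing_inv_cancel_left _ _ ((isUnit_iff_isUnit_det R).mp hR.isUnit)]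
  have hdiff := kleinman_lyapunov_sub (isHermitian_iff_isSymm.mp hPsym)
    (isHermitian_iff_isSymm.mp hR.isHermitian) hRK' hLyap hLyap'
  refine hK'hurwitz.posSemidef_of_lyapunov ?_ hdiff
  simpa only [conjTranspose_eq_transpose_of_trivial] using
    hR.posSemidef.conjTranspose_mul_mul_same (K - K')

/-- Kleinman monotonicity: with `K' = R⁻¹BᵀP` and `P, P'` the symmetric solutions
of the Lyapunov equations for `K` and `K'` respectively (both closed loops Hurwitz),
one has `P' ⪯ P`, i.e. `P − P'` is positive semidefinite. -/
theorem kleinman_monotone {q m : ℕ}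
    (A : Matrix (Fin q) (Fin q) ℝ) (B : Matrix (Fin q) (Fin m) ℝ)
    (Q P P' : Matrix (Fin q) (Fin q) ℝ) (R : Matrix (Fin m) (Fin m) ℝ)
    (K K' : Matrix (Fin m) (Fin q) ℝ)
    (hQ : Q.PosDef) (hR : R.PosDef)
    (hK : IsHurwitz (A - B * K))
    (hPsym : P.IsHermitian)
    (hLyap : (A - B * K)ᵀ * P + P * (A - B * K) + Q + Kᵀ * R * K = 0)
    (hK' : K' = R⁻¹ * Bᵀ * P)
    (hK'hurwitz : IsHurwitz (A - B * K'))
    (hP'sym : P'.IsHermitian)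
    (hLyap' : (A - B * K')ᵀ * P' + P' * (A - B * K') + Q + K'ᵀ * R * K' = 0) :
    (P - P').PosSemidef :=
  kleinman_monotone_general A B Q P P' R K K' hR hPsym hLyap hK' hK'hurwitz hLyap'
end

section
/- Lyapunov equation for a Hurwitz matrix: Let A be a real q×q Hurwitz matrix and Q a real symmetric q×q matrix. Then the Lyapunov equation Aᵀ P + P A + Q = 0 has a unique solution P, it is symmetric, and it is given by P = ∫₀^∞ exp(Aᵀ t) Q exp(A t) dt. Moreover, if Q is positive definite then P is positive definite. -/
open Matrix

/-!
On each generalized eigenspace of `A` (over `ℂ`) with eigenvalue `μ`, `exp(tA) v` is `e^{tμ}`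
times a polynomial in `t`, so `exp(tA) → 0` when `A` is Hurwitz; by the semigroup property the
decay is then exponential. For any `X` the function `t ↦ exp(tAᵀ) X exp(tA)` tends to `0` and has
derivative `exp(tAᵀ) (AᵀX + XA) exp(tA)`, so `∫₀^∞ exp(tAᵀ) (AᵀX + XA) exp(tA) dt = -X`.
Applied to a solution `X = P` this is the integral formula, hence uniqueness; applied to `X = Q`,
after moving `Aᵀ` and `A` past the exponentials, it shows that the integral is a solution.
`Pᵀ` solves the same equation, so `P` is symmetric, and for `Q ≻ 0` the integrand
`exp(tA)ᵀ Q exp(tA)` is positive definite.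
-/

open NormedSpace Filter Set Topology MeasureTheory
open scoped Nat

section BanachAlgebra

variable {𝔸 : Type*} [NormedRing 𝔸] [NormedAlgebra ℝ 𝔸] [CompleteSpace 𝔸]

theorem norm_exp_smul_add_nat_mul_le {a : 𝔸} {s T C : ℝ} (hs : ‖exp (s • a)‖ ≤ C)
    (hT : ‖exp (T • a)‖ ≤ Real.exp (-1)) (k : ℕ) :
    ‖exp ((s + k * T) • a)‖ ≤ C * Real.exp (-k) := by
  -- the Banach-algebra API of `exp` (`exp_add_of_commute`, `exp_continuous`) asks for `ℚ` scalars
  let +nondep : NormedAlgebra ℚ 𝔸 := .restrictScalars ℚ ℝ 𝔸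
  induction k with
  | zero => simpa using hs
  | succ k ih =>
    have hsplit : (s + ↑(k + 1) * T) • a = (s + k * T) • a + T • a := by
      push_cast; rw [← add_smul]; ring_nf
    rw [hsplit, NormedSpace.exp_add_of_commute (((Commute.refl a).smul_left _).smul_right _)]
    calc ‖exp ((s + k * T) • a) * exp (T • a)‖
        ≤ ‖exp ((s + k * T) • a)‖ * ‖exp (T • a)‖ := norm_mul_le _ _
      _ ≤ C * Real.exp (-k) * Real.exp (-1) :=
        mul_le_mul ih hT (norm_nonneg _) ((norm_nonneg _).trans ih)
      _ = C * Real.exp (-↑(k + 1)) := by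
        rw [mul_assoc, ← Real.exp_add]; push_cast; ring_nf

theorem exists_norm_exp_smul_le_of_tendsto_zero {a : 𝔸}
    (ha : Tendsto (fun t : ℝ => exp (t • a)) atTop (𝓝 0)) :
    ∃ C δ : ℝ, 0 < δ ∧ ∀ t, 0 ≤ t → ‖exp (t • a)‖ ≤ C * Real.exp (-δ * t) := by
  let +nondep : NormedAlgebra ℚ 𝔸 := .restrictScalars ℚ ℝ 𝔸
  obtain ⟨T, hT, hT0⟩ : ∃ T : ℝ, ‖exp (T • a)‖ ≤ Real.exp (-1) ∧ 0 < T := by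
    have hlim : Tendsto (fun t : ℝ => ‖exp (t • a)‖) atTop (𝓝 0) := by
      simpa using ha.norm
    exact ((hlim.eventually (ge_mem_nhds (Real.exp_pos _))).and (eventually_gt_atTop 0)).exists
  obtain ⟨C, hC⟩ := isCompact_Icc.exists_bound_of_continuousOn
    ((exp_continuous.comp (continuous_id.smul continuous_const)).continuousOn :
      ContinuousOn (fun s : ℝ => exp (s • a)) (Icc 0 T))
  refine ⟨C * Real.exp 1, T⁻¹, inv_pos.2 hT0, fun t ht => ?_⟩
  set k := ⌊t / T⌋₊
  have hk : t / T - 1 ≤ k := by linarith [Nat.lt_floor_add_one (t / T)]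
  have hkT : k * T ≤ t := (le_div_iff₀ hT0).1 (Nat.floor_le (div_nonneg ht hT0.le))
  have hs : t - k * T ∈ Icc 0 T := by
    constructor
    · linarith
    · have := (div_le_iff₀ hT0).1 (show t / T ≤ k + 1 by linarith); linarith
  calc ‖exp (t • a)‖ = ‖exp ((t - k * T + k * T) • a)‖ := by rw [sub_add_cancel]
    _ ≤ C * Real.exp (-k) := norm_exp_smul_add_nat_mul_le (hC _ hs) hT k
    _ ≤ C * Real.exp (1 - T⁻¹ * t) := by
      gcongr
      · exact (norm_nonneg _).trans (hC 0 ⟨le_rfl, hT0.le⟩)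
      · rw [← div_eq_inv_mul]; linarith
    _ = C * Real.exp 1 * Real.exp (-T⁻¹ * t) := by
      rw [mul_assoc, ← Real.exp_add]; ring_nf

theorem hasDerivAt_exp_smul_mul_mul_exp_smul (a b x : 𝔸) (t : ℝ) :
    HasDerivAt (fun u : ℝ => exp (u • b) * x * exp (u • a))
      (exp (t • b) * (b * x + x * a) * exp (t • a)) t := by
  refine (((hasDerivAt_exp_smul_const b t).mul_const x).mul
    (hasDerivAt_exp_smul_const' a t)).congr_deriv ?_
  simp only [mul_add, add_mul, mul_assoc]

variable {a b : 𝔸} (ha : Tendsto (fun t : ℝ => exp (t • a)) atTop (𝓝 0))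
  (hb : Tendsto (fun t : ℝ => exp (t • b)) atTop (𝓝 0))
include ha hb

theorem integrableOn_exp_smul_mul_mul_exp_smul (x : 𝔸) :
    IntegrableOn (fun t : ℝ => exp (t • b) * x * exp (t • a)) (Ioi 0) := by
  obtain ⟨Ca, δa, hδa, hCa⟩ := exists_norm_exp_smul_le_of_tendsto_zero ha
  obtain ⟨Cb, δb, hδb, hCb⟩ := exists_norm_exp_smul_le_of_tendsto_zero hb
  have hcont : Continuous fun t : ℝ => exp (t • b) * x * exp (t • a) :=
    continuous_iff_continuousAt.2 fun t =>
      (hasDerivAt_exp_smul_mul_mul_exp_smul a b x t).continuousAt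
  refine Integrable.mono' ((exp_neg_integrableOn_Ioi 0 (add_pos hδb hδa)).const_mul
    (Cb * ‖x‖ * Ca)) hcont.aestronglyMeasurable ?_
  filter_upwards [ae_restrict_mem measurableSet_Ioi] with t ht
  have hb' := hCb t (le_of_lt ht)
  have ha' := hCa t (le_of_lt ht)
  calc ‖exp (t • b) * x * exp (t • a)‖ ≤ ‖exp (t • b)‖ * ‖x‖ * ‖exp (t • a)‖ := norm_mul₃_le
    _ ≤ Cb * Real.exp (-δb * t) * ‖x‖ * (Ca * Real.exp (-δa * t)) := by
      have hCb : 0 ≤ Cb * Real.exp (-δb * t) := (norm_nonneg _).trans hb'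
      gcongr
    _ = Cb * ‖x‖ * Ca * Real.exp (-(δb + δa) * t) := by
      rw [neg_add, add_mul, Real.exp_add]; ring

theorem integral_exp_smul_mul_add_mul_mul_exp_smul (x : 𝔸) :
    ∫ t in Ioi (0 : ℝ), exp (t • b) * (b * x + x * a) * exp (t • a) = -x := by
  have hlim : Tendsto (fun t : ℝ => exp (t • b) * x * exp (t • a)) atTop (𝓝 0) := by
    simpa using (hb.mul_const x).mul ha
  have hderiv := hasDerivAt_exp_smul_mul_mul_exp_smul a b x
  rw [integral_Ioi_of_hasDerivAt_of_tendsto (hderiv 0).continuousAt.continuousWithinAt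
    (fun t _ => hderiv t) (integrableOn_exp_smul_mul_mul_exp_smul ha hb _) hlim]
  simp

theorem eq_integral_of_mul_add_mul_add_eq_zero {x y : 𝔸} (h : b * x + x * a + y = 0) :
    x = ∫ t in Ioi (0 : ℝ), exp (t • b) * y * exp (t • a) := by
  rw [eq_neg_of_add_eq_zero_right h]
  simp only [mul_neg, neg_mul, integral_neg, integral_exp_smul_mul_add_mul_mul_exp_smul ha hb,
    neg_neg]

theorem mul_integral_add_integral_mul_add_eq_zero (y : 𝔸) :
    b * (∫ t in Ioi (0 : ℝ), exp (t • b) * y * exp (t • a)) +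
      (∫ t in Ioi (0 : ℝ), exp (t • b) * y * exp (t • a)) * a + y = 0 := by
  have hint := integrableOn_exp_smul_mul_mul_exp_smul ha hb y
  have hcomm : ∀ (c : 𝔸) (t : ℝ), Commute c (exp (t • c)) := fun c t =>
    ((Commute.refl c).smul_right t).exp_right
  rw [← integral_const_mul_of_integrable hint, ← integral_mul_const_of_integrable hint,
    ← integral_add (hint.const_mul b) (hint.mul_const a)]
  have hpoint : ∀ t : ℝ, b * (exp (t • b) * y * exp (t • a)) + exp (t • b) * y * exp (t • a) * a
      = exp (t • b) * (b * y + y * a) * exp (t • a) := fun t => calc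
    _ = b * exp (t • b) * y * exp (t • a) + exp (t • b) * y * (exp (t • a) * a) := by
      noncomm_ring
    _ = exp (t • b) * b * y * exp (t • a) + exp (t • b) * y * (a * exp (t • a)) := by
      rw [(hcomm b t).eq, (hcomm a t).eq]
    _ = exp (t • b) * (b * y + y * a) * exp (t • a) := by noncomm_ring
  simp only [hpoint, integral_exp_smul_mul_add_mul_mul_exp_smul ha hb, neg_add_cancel]

end BanachAlgebra

theorem Complex.tendsto_exp_mul_mul_pow_atTop {μ : ℂ} (hμ : μ.re < 0) (i : ℕ) :
    Tendsto (fun t : ℝ => Complex.exp (t * μ) * (t : ℂ) ^ i) atTop (𝓝 0) := by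
  rw [tendsto_zero_iff_norm_tendsto_zero]
  refine (tendsto_rpow_mul_exp_neg_mul_atTop_nhds_zero i (-μ.re) (neg_pos.2 hμ)).congr' ?_
  filter_upwards [eventually_ge_atTop 0] with t ht
  rw [norm_mul, Complex.norm_exp, Complex.re_ofReal_mul, norm_pow, Complex.norm_real,
    Real.norm_of_nonneg ht, Real.rpow_natCast, neg_neg, mul_comm, mul_comm μ.re]

theorem Module.End.mem_spectrum_of_mem_maxGenEigenspace {K V : Type*} [Field K]
    [AddCommGroup V] [Module K V] [FiniteDimensional K V] {f : Module.End K V} {μ : K} {w : V}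
    (hw : w ∈ f.maxGenEigenspace μ) (hw0 : w ≠ 0) : μ ∈ spectrum K f := by
  have hμ : f.HasUnifEigenvalue μ ⊤ := (Submodule.ne_bot_iff _).2 ⟨w, hw, hw0⟩
  exact Module.End.hasUnifEigenvalue_iff_mem_spectrum.1
    ((Module.End.hasUnifEigenvalue_iff_hasUnifEigenvalue_one (by simp)).1 hμ)

namespace Matrix

variable {n : Type*} [Fintype n] [DecidableEq n]

open scoped Norms.Operator

theorem exp_smul_mulVec_eq_sum {N : Matrix n n ℂ} {w : n → ℂ} {k : ℕ} (hk : (N ^ k) *ᵥ w = 0)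
    (t : ℂ) : exp (t • N) *ᵥ w = ∑ i ∈ Finset.range k, (t ^ i / i !) • ((N ^ i) *ᵥ w) := by
  have hterm : ∀ i, ((i !⁻¹ : ℂ) • (t • N) ^ i) *ᵥ w = (t ^ i / i !) • ((N ^ i) *ᵥ w) := by
    intro i
    rw [smul_pow, smul_smul, smul_mulVec, div_eq_inv_mul]
  have hsum := (exp_series_hasSum_exp' (𝕂 := ℂ) (t • N)).map (mulVec.addMonoidHomLeft w)
    (continuous_id.matrix_mulVec continuous_const)
  refine (hsum.unique (hasSum_sum_of_ne_finset_zero fun i hi => ?_)).trans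
    (Finset.sum_congr rfl fun i _ => hterm i)
  have hi : k ≤ i := by simpa using hi
  have hNi : (N ^ i) *ᵥ w = 0 := by
    rw [← Nat.sub_add_cancel hi, pow_add, ← mulVec_mulVec, hk, mulVec_zero]
  change ((i !⁻¹ : ℂ) • (t • N) ^ i) *ᵥ w = 0
  rw [hterm, hNi, smul_zero]

theorem exp_smul_eq_exp_smul_sub (B : Matrix n n ℂ) (μ t : ℂ) :
    exp (t • B) = Complex.exp (t * μ) • exp (t • (B - μ • 1)) := by
  have hcomm : Commute (t • μ • (1 : Matrix n n ℂ)) (t • (B - μ • 1)) :=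
    ((Commute.one_left _).smul_left _).smul_left _
  have hsplit : t • B = t • μ • (1 : Matrix n n ℂ) + t • (B - μ • 1) := by
    rw [← smul_add, add_sub_cancel]
  have hscalar : exp ((t * μ) • (1 : Matrix n n ℂ)) = Complex.exp (t * μ) • 1 := by
    rw [Complex.exp_eq_exp_ℂ, ← Algebra.algebraMap_eq_smul_one, ← Algebra.algebraMap_eq_smul_one]
    exact (algebraMap_exp_comm _).symm
  rw [hsplit, exp_add_of_commute _ _ hcomm, smul_smul, hscalar, smul_one_mul]

theorem tendsto_exp_smul_mulVec_of_pow_sub_mulVec_eq_zero {B : Matrix n n ℂ} {μ : ℂ}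
    (hμ : μ.re < 0) {w : n → ℂ} {k : ℕ} (hk : ((B - μ • 1) ^ k) *ᵥ w = 0) :
    Tendsto (fun t : ℝ => exp (t • B) *ᵥ w) atTop (𝓝 0) := by
  have hexpand : ∀ t : ℝ, exp (t • B) *ᵥ w = ∑ i ∈ Finset.range k,
      (Complex.exp (t * μ) * (t : ℂ) ^ i / i !) • (((B - μ • 1) ^ i) *ᵥ w) := by
    intro t
    rw [RCLike.real_smul_eq_coe_smul (K := ℂ), exp_smul_eq_exp_smul_sub B μ, smul_mulVec,
      exp_smul_mulVec_eq_sum hk, Finset.smul_sum]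
    simp only [smul_smul, mul_div_assoc]
    rfl
  have hterms := tendsto_finsetSum (Finset.range k) fun i _ =>
    ((Complex.tendsto_exp_mul_mul_pow_atTop hμ i).div_const (i ! : ℂ)).smul_const
      (((B - μ • 1) ^ i) *ᵥ w)
  simpa only [← hexpand, zero_div, zero_smul, Finset.sum_const_zero] using hterms

theorem tendsto_exp_smul_mulVec_of_forall_re_neg {B : Matrix n n ℂ}
    (hB : ∀ μ ∈ spectrum ℂ B, μ.re < 0) (v : n → ℂ) :
    Tendsto (fun t : ℝ => exp (t • B) *ᵥ v) atTop (𝓝 0) := by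
  let f : Module.End ℂ (n → ℂ) := toLinAlgEquiv' B
  have hv : v ∈ ⨆ μ, f.maxGenEigenspace μ := by
    rw [Module.End.iSup_maxGenEigenspace_eq_top]; trivial
  refine Submodule.iSup_induction _ (motive := fun w => Tendsto (fun t : ℝ => exp (t • B) *ᵥ w)
    atTop (𝓝 0)) hv (fun μ w hw => ?_) (by simp)
    (fun x y hx hy => by simpa only [mulVec_add, add_zero] using hx.add hy)
  rcases eq_or_ne w 0 with rfl | hw0
  · simp
  have hμ : μ ∈ spectrum ℂ B := by
    rw [← AlgEquiv.spectrum_eq toLinAlgEquiv' B]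
    exact Module.End.mem_spectrum_of_mem_maxGenEigenspace hw hw0
  obtain ⟨k, hk⟩ := (Module.End.mem_maxGenEigenspace _ _ _).1 hw
  refine tendsto_exp_smul_mulVec_of_pow_sub_mulVec_eq_zero (hB μ hμ) (k := k) ?_
  rwa [← toLinAlgEquiv'_apply, map_pow, map_sub, map_smul, map_one]

theorem tendsto_exp_smul_of_forall_re_neg {B : Matrix n n ℂ}
    (hB : ∀ μ ∈ spectrum ℂ B, μ.re < 0) :
    Tendsto (fun t : ℝ => exp (t • B)) atTop (𝓝 0) := by
  refine tendsto_pi_nhds.2 fun i => tendsto_pi_nhds.2 fun j => ?_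
  have hcol := tendsto_pi_nhds.1 (tendsto_exp_smul_mulVec_of_forall_re_neg hB (Pi.single j 1)) i
  simpa only [mulVec_single_one, col_apply, Pi.zero_apply, zero_apply] using hcol

end Matrix

namespace IsHurwitz

open scoped Matrix.Norms.Operator

variable {q : ℕ} {A Q P : Matrix (Fin q) (Fin q) ℝ}

theorem tendsto_exp_smul (hA : IsHurwitz A) : Tendsto (fun t : ℝ => exp (t • A)) atTop (𝓝 0) := by
  convert ((continuous_id.matrix_map Complex.continuous_re).tendsto 0).comp
    (tendsto_exp_smul_of_forall_re_neg hA) using 2 with t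
  · have hsmul : t • A.map Complex.ofReal = (t • A).map Complex.ofReal := by
      ext; simp [Complex.real_smul]
    have hmap : (exp (t • A)).map Complex.ofReal = exp ((t • A).map Complex.ofReal) :=
      map_exp Complex.ofRealHom.mapMatrix (continuous_id.matrix_map Complex.continuous_ofReal) _
    rw [Function.comp_apply, id, hsmul, ← hmap, Matrix.map_map]
    ext; simp
  · simp

theorem tendsto_exp_smul_transpose (hA : IsHurwitz A) :
    Tendsto (fun t : ℝ => exp (t • Aᵀ)) atTop (𝓝 0) := by
  simpa only [← transpose_smul, exp_transpose, Function.comp_def, id, transpose_zero] using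
    (continuous_id.matrix_transpose.tendsto 0).comp hA.tendsto_exp_smul

theorem exists_lyapunov_s10 (hA : IsHurwitz A) (Q : Matrix (Fin q) (Fin q) ℝ) :
    ∃ P, Aᵀ * P + P * A + Q = 0 :=
  ⟨_, mul_integral_add_integral_mul_add_eq_zero hA.tendsto_exp_smul
    hA.tendsto_exp_smul_transpose Q⟩

theorem lyapunov_unique {P' : Matrix (Fin q) (Fin q) ℝ} (hA : IsHurwitz A)
    (hP : Aᵀ * P + P * A + Q = 0) (hP' : Aᵀ * P' + P' * A + Q = 0) : P = P' :=
  (eq_integral_of_mul_add_mul_add_eq_zero hA.tendsto_exp_smul hA.tendsto_exp_smul_transpose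
    hP).trans (eq_integral_of_mul_add_mul_add_eq_zero hA.tendsto_exp_smul
      hA.tendsto_exp_smul_transpose hP').symm

theorem lyapunov_apply (hA : IsHurwitz A) (hP : Aᵀ * P + P * A + Q = 0) (i j : Fin q) :
    P i j = ∫ t in Ioi (0 : ℝ), (exp (t • Aᵀ) * Q * exp (t • A)) i j := by
  have hF := integrableOn_exp_smul_mul_mul_exp_smul hA.tendsto_exp_smul
    hA.tendsto_exp_smul_transpose Q
  rw [eq_integral_of_mul_add_mul_add_eq_zero hA.tendsto_exp_smul
    hA.tendsto_exp_smul_transpose hP]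
  exact ((LinearMap.toContinuousLinearMap (entryLinearMap ℝ ℝ i j)).integral_comp_comm hF).symm

theorem isHermitian_of_lyapunov (hA : IsHurwitz A) (hQ : Q.IsHermitian)
    (hP : Aᵀ * P + P * A + Q = 0) : P.IsHermitian := by
  have hPT : Aᵀ * Pᵀ + Pᵀ * A + Q = 0 := by
    simpa only [transpose_add, transpose_mul, transpose_transpose, transpose_zero,
      ← conjTranspose_eq_transpose_of_trivial Q, hQ.eq, add_comm (Pᵀ * A)] using
      congrArg transpose hP
  rw [IsHermitian, conjTranspose_eq_transpose_of_trivial]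
  exact hA.lyapunov_unique hPT hP

theorem posDef_of_lyapunov_s10 (hA : IsHurwitz A) (hQ : Q.PosDef) (hP : Aᵀ * P + P * A + Q = 0) :
    P.PosDef := by
  have hF := integrableOn_exp_smul_mul_mul_exp_smul hA.tendsto_exp_smul
    hA.tendsto_exp_smul_transpose Q
  refine PosDef.of_dotProduct_mulVec_pos (hA.isHermitian_of_lyapunov hQ.1 hP) fun v hv => ?_
  let quad : Matrix (Fin q) (Fin q) ℝ →L[ℝ] ℝ := LinearMap.toContinuousLinearMap
    (LinearMap.applyₗ v ∘ₗ LinearMap.applyₗ (star v) ∘ₗ (toLinearMap₂' ℝ).toLinearMap)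
  have hquad : ∀ M, quad M = star v ⬝ᵥ M *ᵥ v := fun M => toLinearMap₂'_apply' M (star v) v
  have hpos : ∀ t : ℝ, 0 < quad (exp (t • Aᵀ) * Q * exp (t • A)) := by
    intro t
    rw [hquad, ← transpose_smul, exp_transpose, ← conjTranspose_eq_transpose_of_trivial]
    exact (hQ.conjTranspose_mul_mul_same
      (mulVec_injective_of_isUnit (Matrix.isUnit_exp _))).dotProduct_mulVec_pos hv
  have hint_pos : 0 < ∫ t in Ioi (0 : ℝ), quad (exp (t • Aᵀ) * Q * exp (t • A)) := by
    rw [integral_pos_iff_support_of_nonneg (fun t => (hpos t).le) (quad.integrable_comp hF),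
      Function.support_eq_univ fun t => (hpos t).ne']
    simp
  rw [← hquad, eq_integral_of_mul_add_mul_add_eq_zero hA.tendsto_exp_smul
    hA.tendsto_exp_smul_transpose hP]
  -- the two integrals carry different (defeq) norm instances on matrices, so `rw` cannot match them
  exact hint_pos.trans_eq (quad.integral_comp_comm hF)

end IsHurwitz

/-- Lyapunov equation for a Hurwitz matrix: if `A` is Hurwitz and `Q` is
symmetric, then `AᵀP + PA + Q = 0` has a unique solution `P`; it is symmetric and is given
entrywise by `P = ∫₀^∞ exp(Aᵀt) Q exp(At) dt`; moreover, if `Q ≻ 0` then `P ≻ 0`. -/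
theorem lyapunov_equation_hurwitz {q : ℕ}
    (A Q : Matrix (Fin q) (Fin q) ℝ)
    (hA : IsHurwitz A) (hQ : Q.IsHermitian) :
    (∃! P : Matrix (Fin q) (Fin q) ℝ, Aᵀ * P + P * A + Q = 0) ∧
    (∀ P : Matrix (Fin q) (Fin q) ℝ, Aᵀ * P + P * A + Q = 0 →
      P.IsHermitian ∧
      (∀ i j, P i j =
        ∫ t in Set.Ioi (0 : ℝ),
          (NormedSpace.exp (t • Aᵀ) * Q * NormedSpace.exp (t • A)) i j) ∧
      (Q.PosDef → P.PosDef)) := by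
  obtain ⟨P₀, hP₀⟩ := hA.exists_lyapunov_s10 Q
  refine ⟨⟨P₀, hP₀, fun P hP => hA.lyapunov_unique hP hP₀⟩, fun P hP => ?_⟩
  exact ⟨hA.isHermitian_of_lyapunov hQ hP, hA.lyapunov_apply hP,
    fun hQpd => hA.posDef_of_lyapunov_s10 hQpd hP⟩
end

section
/- Riccati solution yields a Hurwitz closed loop: Let A be a real q×q matrix, B a real q×m matrix, Q a real symmetric positive definite q×q matrix, and R a real symmetric positive definite m×m matrix. If P is a real symmetric positive definite solution of the algebraic Riccati equation Aᵀ P + P A + Q − P B R⁻¹ Bᵀ P = 0, then the closed-loop matrix A − B R⁻¹ Bᵀ P is Hurwitz. -/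
/-!
The Riccati solution `P` is a Lyapunov function for the closed loop `A - K`, `K = BR⁻¹BᵀP`:
the Riccati equation rewrites as `(A - K)ᵀP + P(A - K) = -(Q + PBR⁻¹BᵀP)`, which is negative
definite. If `(A - K)v = μv` with `v ∈ ℂⁿ` nonzero, the left side evaluated as a Hermitian form at
`v` equals `2 Re μ · v*Pv`, so `Re μ < 0`.
-/

open Matrix

namespace Matrix

variable {n : Type*} [Fintype n]

theorem exists_mulVec_eq_smul_of_mem_spectrum_s11 {K : Type*} [Field K] [DecidableEq n]
    {M : Matrix n n K} {μ : K} (hμ : μ ∈ spectrum K M) : ∃ v ≠ 0, M *ᵥ v = μ • v := by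
  rw [← spectrum_toLin', ← Module.End.hasEigenvalue_iff_mem_spectrum] at hμ
  obtain ⟨v, hv, hv0⟩ := hμ.exists_hasEigenvector
  exact ⟨v, hv0, by simpa using Module.End.mem_eigenspace_iff.mp hv⟩

theorem map_ofReal_mul {l o : Type*} (M : Matrix l n ℝ) (N : Matrix n o ℝ) :
    (M * N).map Complex.ofReal = M.map Complex.ofReal * N.map Complex.ofReal :=
  Matrix.map_mul (f := Complex.ofRealHom)

theorem re_star_dotProduct_map_ofReal_mulVec_s11 (M : Matrix n n ℝ) (v : n → ℂ) :
    (star v ⬝ᵥ M.map Complex.ofReal *ᵥ v).re =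
      (fun i ↦ (v i).re) ⬝ᵥ M *ᵥ (fun i ↦ (v i).re) +
        (fun i ↦ (v i).im) ⬝ᵥ M *ᵥ (fun i ↦ (v i).im) := by
  simp only [dotProduct, mulVec, Complex.re_sum, Finset.mul_sum, ← Finset.sum_add_distrib]
  refine Finset.sum_congr rfl fun i _ ↦ Finset.sum_congr rfl fun j _ ↦ ?_
  simp only [Pi.star_apply, map_apply, Complex.mul_re, Complex.mul_im, Complex.star_def,
    Complex.conj_re, Complex.conj_im, Complex.ofReal_re, Complex.ofReal_im]
  ring

theorem PosDef.re_star_dotProduct_map_ofReal_mulVec_pos {M : Matrix n n ℝ} (hM : M.PosDef)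
    {v : n → ℂ} (hv : v ≠ 0) : 0 < (star v ⬝ᵥ M.map Complex.ofReal *ᵥ v).re := by
  rw [re_star_dotProduct_map_ofReal_mulVec_s11]
  by_cases hre : (fun i ↦ (v i).re) = 0
  · have him : (fun i ↦ (v i).im) ≠ 0 := fun him ↦
      hv (funext fun i ↦ Complex.ext (congrFun hre i) (congrFun him i))
    exact add_pos_of_nonneg_of_pos (hM.posSemidef.dotProduct_mulVec_nonneg _)
      (hM.dotProduct_mulVec_pos him)
  · exact add_pos_of_pos_of_nonneg (hM.dotProduct_mulVec_pos hre)
      (hM.posSemidef.dotProduct_mulVec_nonneg _)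

theorem star_dotProduct_lyapunov_map_ofReal_mulVec (A P : Matrix n n ℝ) {μ : ℂ} {v : n → ℂ}
    (hv : A.map Complex.ofReal *ᵥ v = μ • v) :
    star v ⬝ᵥ (Aᵀ * P + P * A).map Complex.ofReal *ᵥ v =
      (star μ + μ) * (star v ⬝ᵥ P.map Complex.ofReal *ᵥ v) := by
  have hconj : (A.map Complex.ofReal)ᴴ = (A.map Complex.ofReal)ᵀ := by
    ext i j; simp
  have hleft : star v ᵥ* (A.map Complex.ofReal)ᵀ = star μ • star v := by
    rw [← hconj, ← star_mulVec, hv, star_smul]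
  rw [Matrix.map_add _ Complex.ofReal_add, add_mulVec, dotProduct_add, map_ofReal_mul,
    map_ofReal_mul, transpose_map, ← mulVec_mulVec, ← mulVec_mulVec, dotProduct_mulVec, hleft,
    hv, smul_dotProduct, mulVec_smul, dotProduct_smul, smul_eq_mul, smul_eq_mul, add_mul]

theorem riccati_closedLoop_lyapunov {m : Type*} [Fintype m] [DecidableEq m]
    {A Q P : Matrix n n ℝ} {B : Matrix n m ℝ} {R : Matrix m m ℝ} (hP : P.IsSymm)
    (hR : R.IsSymm) (hARE : Aᵀ * P + P * A + Q - P * B * R⁻¹ * Bᵀ * P = 0) :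
    (A - B * (R⁻¹ * Bᵀ * P))ᵀ * P + P * (A - B * (R⁻¹ * Bᵀ * P)) =
      -(Q + P * B * R⁻¹ * Bᵀ * P) := by
  have hKP : (B * (R⁻¹ * Bᵀ * P))ᵀ * P = P * B * R⁻¹ * Bᵀ * P := by
    simp only [transpose_mul, transpose_transpose, hP.eq, hR.inv.eq, Matrix.mul_assoc]
  rw [transpose_sub, Matrix.sub_mul, Matrix.mul_sub, hKP, ← sub_eq_zero, ← hARE]
  simp only [Matrix.mul_assoc]
  abel

end Matrix

theorem isHurwitz_of_lyapunov_s11 {n : ℕ} {A P N : Matrix (Fin n) (Fin n) ℝ} (hP : P.PosDef)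
    (hN : N.PosDef) (hLyap : Aᵀ * P + P * A = -N) : IsHurwitz A := by
  intro μ hμ
  obtain ⟨v, hv0, hv⟩ := exists_mulVec_eq_smul_of_mem_spectrum_s11 hμ
  have key := congrArg Complex.re (star_dotProduct_lyapunov_map_ofReal_mulVec A P hv)
  rw [hLyap, Matrix.map_neg _ Complex.ofReal_neg, neg_mulVec, dotProduct_neg, Complex.neg_re,
    Complex.star_def, add_comm, Complex.add_conj, Complex.re_ofReal_mul] at key
  nlinarith [hP.re_star_dotProduct_map_ofReal_mulVec_pos hv0,
    hN.re_star_dotProduct_map_ofReal_mulVec_pos hv0]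

/-- a symmetric positive definite solution `P` of the ARE
`AᵀP + PA + Q − PBR⁻¹BᵀP = 0` (with `Q ≻ 0`, `R ≻ 0`) yields a Hurwitz closed-loop matrix
`A − BR⁻¹BᵀP`. -/
theorem riccati_closed_loop_hurwitz {q m : ℕ}
    (A : Matrix (Fin q) (Fin q) ℝ) (B : Matrix (Fin q) (Fin m) ℝ)
    (Q P : Matrix (Fin q) (Fin q) ℝ) (R : Matrix (Fin m) (Fin m) ℝ)
    (hQ : Q.PosDef) (hR : R.PosDef)
    (hP : P.PosDef)
    (hARE : Aᵀ * P + P * A + Q - P * B * R⁻¹ * Bᵀ * P = 0) :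
    IsHurwitz (A - B * (R⁻¹ * Bᵀ * P)) := by
  have hPsymm : P.IsSymm := hP.isHermitian
  have hS : (P * B * R⁻¹ * Bᵀ * P).PosSemidef := by
    simpa [transpose_mul, hPsymm.eq, Matrix.mul_assoc] using
      hR.inv.posSemidef.conjTranspose_mul_mul_same (Bᵀ * P)
  exact isHurwitz_of_lyapunov_s11 hP (hQ.add_posSemidef hS)
    (riccati_closedLoop_lyapunov hPsymm hR.isHermitian hARE)
end
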